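/- arXiv:math/0502256 — 2 statements merged into one kernel-verified Lean document; each statement's English description precedes it below -/
import Mathlib

section
/- Let (X,d) be a geodesic metric space, let D>0, and for every pair of points x,y ∈ X let η(x,y):[0,1]→X be a continuous path with η(x,y)(0)=x and η(x,y)(1)=y such that: (1) if d(x,y) ≤ 1 then the diameter of η(x,y)([0,1]) is at most D; and (3) for all x,y,z ∈ X, the set η(x,y)([0,1]) is contained in the D-neighborhood of η(x,z)([0,1]) ∪ η(z,y)([0,1]). Then for every natural number k and every 1-Lipschitz path c:[0,2^k]→X, the set η(c(0), c(2^k))([0,1]) is contained in the (kD + D)-neighborhood of the image c([0,2^k]). -/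
/-- `c` restricted to `[a,b]` is a geodesic (an isometric embedding of the interval). -/
def IsGeodesicOn {X : Type*} [MetricSpace X] (c : ℝ → X) (a b : ℝ) : Prop :=
  ∀ s ∈ Set.Icc a b, ∀ t ∈ Set.Icc a b, dist (c s) (c t) = |s - t|

/-- A geodesic metric space: any two points are joined by a geodesic. -/
def GeodesicSpace (X : Type*) [MetricSpace X] : Prop :=
  ∀ x y : X, ∃ c : ℝ → X, c 0 = x ∧ c (dist x y) = y ∧ IsGeodesicOn c 0 (dist x y)

/-- In a geodesic metric space with a family of paths `η(x,y)` satisfying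
conditions (1) and (3) with constant `D > 0`, for every `k ∈ ℕ` and every 1-Lipschitz path
`c : [0, 2^k] → X`, the set `η(c 0, c (2^k))([0,1])` is contained in the
`(kD + D)`-neighborhood of the image of `c`. -/
theorem eta_in_neighborhood_of_lipschitz_path
    {X : Type*} [MetricSpace X] (hX : GeodesicSpace X)
    (D : ℝ) (hD : 0 < D) (η : X → X → ℝ → X)
    (hcont : ∀ x y : X, ContinuousOn (η x y) (Set.Icc 0 1))
    (hends : ∀ x y : X, η x y 0 = x ∧ η x y 1 = y)
    -- (1) short distance implies bounded diameter
    (h1 : ∀ x y : X, dist x y ≤ 1 → Metric.diam (η x y '' Set.Icc 0 1) ≤ D)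
    -- (3) thinness of η-triangles
    (h3 : ∀ x y z : X, ∀ p ∈ η x y '' Set.Icc (0:ℝ) 1,
      Metric.infDist p
        ((η x z '' Set.Icc (0:ℝ) 1) ∪ (η z y '' Set.Icc (0:ℝ) 1)) ≤ D) :
    ∀ k : ℕ, ∀ c : ℝ → X,
      (∀ s ∈ Set.Icc (0:ℝ) (2 ^ k), ∀ t ∈ Set.Icc (0:ℝ) (2 ^ k),
        dist (c s) (c t) ≤ |s - t|) →
      ∀ p ∈ η (c 0) (c (2 ^ k)) '' Set.Icc (0:ℝ) 1,
        Metric.infDist p (c '' Set.Icc (0:ℝ) (2 ^ k)) ≤ k * D + D := by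
  intro k
  induction k with
  | zero =>
    intro c hc p hp
    have h0 : (0:ℝ) ∈ Set.Icc (0:ℝ) (2 ^ (0:ℕ)) := by norm_num
    have h1' : (2:ℝ) ^ (0:ℕ) ∈ Set.Icc (0:ℝ) (2 ^ (0:ℕ)) := by norm_num
    have hd : dist (c 0) (c (2 ^ (0:ℕ))) ≤ 1 := by
      have := hc 0 h0 (2 ^ (0:ℕ)) h1'
      simpa using this
    have hdiam := h1 (c 0) (c (2 ^ (0:ℕ))) hd
    have hc0 : c 0 ∈ η (c 0) (c (2 ^ (0:ℕ))) '' Set.Icc (0:ℝ) 1 :=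
      ⟨0, by norm_num, (hends _ _).1⟩
    have hbdd : Bornology.IsBounded (η (c 0) (c (2 ^ (0:ℕ))) '' Set.Icc (0:ℝ) 1) :=
      (isCompact_Icc.image_of_continuousOn (hcont _ _)).isBounded
    have hdp : dist p (c 0) ≤ D :=
      (Metric.dist_le_diam_of_mem hbdd hp hc0).trans hdiam
    have hmem : c 0 ∈ c '' Set.Icc (0:ℝ) (2 ^ (0:ℕ)) := ⟨0, h0, rfl⟩
    have := (Metric.infDist_le_dist_of_mem hmem).trans hdp
    simpa using this
  | succ k ih =>
    intro c hc p hp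
    set m : ℝ := 2 ^ k with hmdef
    have hm0 : (0:ℝ) ≤ m := by positivity
    have hm2 : (2:ℝ) ^ (k+1) = m + m := by rw [hmdef, pow_succ]; ring
    have hsubI : Set.Icc (0:ℝ) m ⊆ Set.Icc (0:ℝ) (2 ^ (k+1)) :=
      Set.Icc_subset_Icc le_rfl (by rw [hm2]; linarith)
    -- restricted Lipschitz hypotheses
    have hc1 : ∀ s ∈ Set.Icc (0:ℝ) (2 ^ k), ∀ t ∈ Set.Icc (0:ℝ) (2 ^ k),
        dist (c s) (c t) ≤ |s - t| := fun s hs t ht => hc s (hsubI hs) t (hsubI ht)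
    set c' : ℝ → X := fun t => c (t + m) with hc'def
    have hc'0 : c' 0 = c m := by simp [hc'def]
    have hc'm : c' (2 ^ k) = c (2 ^ (k+1)) := by
      simp only [hc'def]
      rw [hm2]
    have hc2 : ∀ s ∈ Set.Icc (0:ℝ) (2 ^ k), ∀ t ∈ Set.Icc (0:ℝ) (2 ^ k),
        dist (c' s) (c' t) ≤ |s - t| := by
      intro s hs t ht
      have hs' : s + m ∈ Set.Icc (0:ℝ) (2 ^ (k+1)) := by
        constructor
        · linarith [hs.1]
        · rw [hm2]; linarith [hs.2]
      have ht' : t + m ∈ Set.Icc (0:ℝ) (2 ^ (k+1)) := by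
        constructor
        · linarith [ht.1]
        · rw [hm2]; linarith [ht.2]
      have := hc (s + m) hs' (t + m) ht'
      simpa [hc'def] using this
    set A := η (c 0) (c m) '' Set.Icc (0:ℝ) 1 with hA
    set B := η (c m) (c (2 ^ (k+1))) '' Set.Icc (0:ℝ) 1 with hB
    have hpAB : Metric.infDist p (A ∪ B) ≤ D := h3 (c 0) (c (2 ^ (k+1))) (c m) p hp
    have hcompA : IsCompact A := isCompact_Icc.image_of_continuousOn (hcont _ _)
    have hcompB : IsCompact B := isCompact_Icc.image_of_continuousOn (hcont _ _)
    have hne : (A ∪ B).Nonempty :=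
      Set.Nonempty.inl ⟨η (c 0) (c m) 0, ⟨0, by norm_num, rfl⟩⟩
    obtain ⟨q, hq, hqd⟩ := (hcompA.union hcompB).exists_infDist_eq_dist hne p
    have hdpq : dist p q ≤ D := by rw [← hqd]; exact hpAB
    -- q is within k*D + D of the image of c on [0, 2^(k+1)]
    have hq2 : Metric.infDist q (c '' Set.Icc (0:ℝ) (2 ^ (k+1))) ≤ k * D + D := by
      rcases hq with hqA | hqB
      · have := ih c hc1 q hqA
        refine le_trans (Metric.infDist_le_infDist_of_subset ?_ ?_) this
        · exact Set.image_subset_iff.mpr (fun t ht => ⟨t, hsubI ht, rfl⟩)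
        · exact ⟨c 0, 0, by constructor <;> [rfl; positivity], rfl⟩
      · have hqB' : q ∈ η (c' 0) (c' (2 ^ k)) '' Set.Icc (0:ℝ) 1 := by
          rw [hc'0, hc'm]; exact hqB
        have := ih c' hc2 q hqB'
        refine le_trans (Metric.infDist_le_infDist_of_subset ?_ ?_) this
        · intro x hx
          obtain ⟨t, ht, rfl⟩ := hx
          exact ⟨t + m, ⟨by linarith [ht.1], by rw [hm2]; linarith [ht.2]⟩, rfl⟩
        · exact ⟨c' 0, 0, by constructor <;> [rfl; positivity], rfl⟩
    have htri : Metric.infDist p (c '' Set.Icc (0:ℝ) (2 ^ (k+1))) ≤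
        dist p q + Metric.infDist q (c '' Set.Icc (0:ℝ) (2 ^ (k+1))) := by
      have := Metric.infDist_le_infDist_add_dist (x := p) (y := q)
        (s := c '' Set.Icc (0:ℝ) (2 ^ (k+1)))
      linarith
    push_cast
    have : Metric.infDist p (c '' Set.Icc (0:ℝ) (2 ^ (k+1))) ≤ D + (k * D + D) := by
      calc Metric.infDist p (c '' Set.Icc (0:ℝ) (2 ^ (k+1)))
          ≤ dist p q + Metric.infDist q (c '' Set.Icc (0:ℝ) (2 ^ (k+1))) := htri
        _ ≤ D + (k * D + D) := add_le_add hdpq hq2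
    linarith
end

section
/- Let (X,d) be a metric space, let k>0, let c:[0,k]→X be an isometric embedding (a geodesic), let η:[0,1]→X be a continuous path with η(0)=c(0) and η(1)=c(k), and let κ>0. If every point of η([0,1]) lies within distance κ of the image c([0,k]), then every point of c([0,k]) lies within distance 3κ of the image η([0,1]). -/
/-- Let `c : [0,k] → X` be a geodesic and `η : [0,1] → X` a continuous
path with the same endpoints. If every point of `η([0,1])` lies within distance `κ` of
`c([0,k])`, then every point of `c([0,k])` lies within distance `3κ` of `η([0,1])`. -/
theorem geodesic_close_to_eta
    {X : Type*} [MetricSpace X] (k : ℝ) (hk : 0 < k)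
    (c : ℝ → X) (hc : IsGeodesicOn c 0 k)
    (η : ℝ → X) (hη : ContinuousOn η (Set.Icc 0 1))
    (h0 : η 0 = c 0) (h1 : η 1 = c k)
    (κ : ℝ) (hκ : 0 < κ)
    (hclose : ∀ p ∈ η '' Set.Icc (0:ℝ) 1, Metric.infDist p (c '' Set.Icc 0 k) ≤ κ) :
    ∀ p ∈ c '' Set.Icc 0 k, Metric.infDist p (η '' Set.Icc (0:ℝ) 1) ≤ 3 * κ := by
  rintro p ⟨t₀, ⟨ht₀0, ht₀k⟩, rfl⟩
  set S₁ := c '' Set.Icc 0 t₀ with hS₁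
  set S₂ := c '' Set.Icc t₀ k with hS₂
  have hS₁n : S₁.Nonempty := ⟨c t₀, t₀, ⟨ht₀0, le_refl _⟩, rfl⟩
  have hS₂n : S₂.Nonempty := ⟨c t₀, t₀, ⟨le_refl _, ht₀k⟩, rfl⟩
  set g : ℝ → ℝ := fun s => Metric.infDist (η s) S₁ - Metric.infDist (η s) S₂ with hg
  have hgc : ContinuousOn g (Set.Icc 0 1) :=
    (((Metric.continuous_infDist_pt S₁).comp_continuousOn hη).sub
      ((Metric.continuous_infDist_pt S₂).comp_continuousOn hη))
  have hg0 : g 0 ≤ 0 := by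
    have h1' : Metric.infDist (η 0) S₁ = 0 := by
      rw [h0]
      exact Metric.infDist_zero_of_mem ⟨0, ⟨le_refl _, ht₀0⟩, rfl⟩
    have h2' : 0 ≤ Metric.infDist (η 0) S₂ := Metric.infDist_nonneg
    simp only [hg]
    linarith
  have hg1 : 0 ≤ g 1 := by
    have h1' : Metric.infDist (η 1) S₂ = 0 := by
      rw [h1]
      exact Metric.infDist_zero_of_mem ⟨k, ⟨ht₀k, le_refl _⟩, rfl⟩
    have h2' : 0 ≤ Metric.infDist (η 1) S₁ := Metric.infDist_nonneg
    simp only [hg]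
    linarith
  obtain ⟨s, hs, hgs⟩ : ∃ s ∈ Set.Icc (0:ℝ) 1, g s = 0 := by
    have := intermediate_value_Icc (by norm_num : (0:ℝ) ≤ 1) hgc
    obtain ⟨s, hs, hgs⟩ := this ⟨hg0, hg1⟩
    exact ⟨s, hs, hgs⟩
  -- Main estimate: dist (c t₀) (η s) ≤ 3κ
  have key : dist (c t₀) (η s) ≤ 3 * κ := by
    have hforall : ∀ ε > (0:ℝ), dist (c t₀) (η s) ≤ 3 * κ + 3 * ε := by
      intro ε hε
      have hcl : Metric.infDist (η s) (c '' Set.Icc 0 k) < κ + ε :=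
        lt_of_le_of_lt (hclose (η s) ⟨s, hs, rfl⟩) (by linarith)
      have hckn : (c '' Set.Icc (0:ℝ) k).Nonempty := ⟨c 0, 0, ⟨le_refl _, le_of_lt hk⟩, rfl⟩
      obtain ⟨q, hq, hdq⟩ := (Metric.infDist_lt_iff hckn).mp hcl
      obtain ⟨u, hu, rfl⟩ := hq
      have hboth : Metric.infDist (η s) S₁ < κ + ε ∧ Metric.infDist (η s) S₂ < κ + ε := by
        have heq : Metric.infDist (η s) S₁ = Metric.infDist (η s) S₂ := by
          have := hgs; simp only [hg] at this; linarith
        rcases le_total u t₀ with h | h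
        · have : Metric.infDist (η s) S₁ ≤ dist (η s) (c u) :=
            Metric.infDist_le_dist_of_mem ⟨u, ⟨hu.1, h⟩, rfl⟩
          constructor <;> [linarith; linarith [heq ▸ lt_of_le_of_lt this hdq]]
        · have : Metric.infDist (η s) S₂ ≤ dist (η s) (c u) :=
            Metric.infDist_le_dist_of_mem ⟨u, ⟨h, hu.2⟩, rfl⟩
          constructor <;> [linarith [heq ▸ lt_of_le_of_lt this hdq]; linarith]
      obtain ⟨u₁, hu₁, hd₁⟩ := (Metric.infDist_lt_iff hS₁n).mp hboth.1
      obtain ⟨u₂, hu₂, hd₂⟩ := (Metric.infDist_lt_iff hS₂n).mp hboth.2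
      obtain ⟨v₁, hv₁, rfl⟩ := hu₁
      obtain ⟨v₂, hv₂, rfl⟩ := hu₂
      have hv₁k : v₁ ∈ Set.Icc (0:ℝ) k := ⟨hv₁.1, le_trans hv₁.2 ht₀k⟩
      have hv₂k : v₂ ∈ Set.Icc (0:ℝ) k := ⟨le_trans ht₀0 hv₂.1, hv₂.2⟩
      have ht₀mem : t₀ ∈ Set.Icc (0:ℝ) k := ⟨ht₀0, ht₀k⟩
      have hd12 : dist (c v₁) (c v₂) = v₂ - v₁ := by
        rw [hc v₁ hv₁k v₂ hv₂k, abs_of_nonpos (by linarith [hv₁.2, hv₂.1])]; ring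
      have hdist12 : v₂ - v₁ < 2 * κ + 2 * ε := by
        have := dist_triangle (c v₁) (η s) (c v₂)
        rw [hd12] at this
        rw [dist_comm (c v₁) (η s)] at this
        linarith
      have ht₀v₁ : dist (c t₀) (c v₁) = t₀ - v₁ := by
        rw [hc t₀ ht₀mem v₁ hv₁k, abs_of_nonneg (by linarith [hv₁.2])]
      calc dist (c t₀) (η s) ≤ dist (c t₀) (c v₁) + dist (c v₁) (η s) :=
            dist_triangle _ _ _
        _ = (t₀ - v₁) + dist (c v₁) (η s) := by rw [ht₀v₁]
        _ ≤ (v₂ - v₁) + dist (η s) (c v₁) := by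
            rw [dist_comm]; linarith [hv₂.1, hv₁.2]
        _ ≤ 3 * κ + 3 * ε := by linarith
    refine le_of_forall_pos_le_add fun ε hε => ?_
    have := hforall (ε / 3) (by linarith)
    linarith
  calc Metric.infDist (c t₀) (η '' Set.Icc (0:ℝ) 1) ≤ dist (c t₀) (η s) :=
        Metric.infDist_le_dist_of_mem ⟨s, hs, rfl⟩
    _ ≤ 3 * κ := key
end
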